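/- arXiv:1008.3024 — 2 statements merged into one kernel-verified Lean document; each statement's English description precedes it below -/
import Mathlib

section
/- Let R be a commutative ring and I an ideal of R with I² = 0. Let S and B be R-algebras, both flat as R-modules, and let f : S → B be an R-algebra homomorphism such that the induced ring homomorphism S/IS → B/IB is étale. Then f is étale, i.e., B is an étale S-algebra via f. -/
/-!
Every extended ideal `I • A` squares to zero, so Nakayama's lemma holds for it without finiteness
hypotheses. Write `S̄ = S/IS` and `B̄ = B/IB`.

Unramified: the conormal sequence of `B → B̄` and `Ω[B̄/S] = 0` give `Ω[B/S] = IB • Ω[B/S]`.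

Flatness of `B` over `R` enters only through `ker q ∩ I P = I • ker q` for surjections
`q : P → B`. It makes lifts of the relations of `B̄` over `S̄` generate those of `B` over `S`.
It also gives formal smoothness: a map `B → C/IC` is first lifted on a polynomial algebra
`P → C`; on `K = ker (P → B)` this lift only depends on the class in `K̄/K̄²`, where `K̄` is the
kernel of the reduced presentation `P̄ → B̄`, and a section of `P̄/K̄² → B̄` turns it into a
derivation correcting the lift so that it kills `K`. A map `B → C/J` is lifted first to `C/IC`
through `B̄`, then to `C`, and the result is right modulo `J` because `B` is unramified.
-/

universe u

open TensorProduct MvPolynomial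

theorem Submodule.le_of_le_sup_smul_of_sq_eq_bot {A M : Type*} [CommRing A] [AddCommGroup M]
    [Module A M] {J : Ideal A} (hJ : J ^ 2 = ⊥) {N N' : Submodule A M}
    (h : N' ≤ N ⊔ J • N') : N' ≤ N := by
  have hJN' : J • N' ≤ N :=
    calc J • N' ≤ J • (N ⊔ J • N') := Submodule.smul_mono le_rfl h
      _ = J • N ⊔ (J ^ 2) • N' := by rw [Submodule.smul_sup, ← mul_smul, pow_two]
      _ ≤ N := by rw [hJ, Submodule.bot_smul, sup_bot_eq]; exact Submodule.smul_le_right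
  exact h.trans (sup_le le_rfl hJN')

theorem Ideal.map_sq_eq_bot {A B : Type*} [CommRing A] [CommRing B] {I : Ideal A} (f : A →+* B)
    (hI : I ^ 2 = ⊥) : I.map f ^ 2 = ⊥ := by
  rw [← Ideal.map_pow, hI, Ideal.map_bot]

section SquareZeroLift

variable {S P : Type*} [CommRing S] [CommRing P] [Algebra S P]
  {C : Type*} [CommRing C] [Algebra S C] [Algebra P C] [IsScalarTower S P C]

/-- The derivation is `x ↦ Θ (algebraMap P T x - f x)`, where `Θ : J → L` sends the class of
`k ∈ K` to `algebraMap P C k`. -/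
theorem exists_derivation_eq_algebraMap_on_ideal {T : Type*} [CommRing T] [Algebra S T]
    [Algebra P T] [IsScalarTower S P T] {K : Ideal P} {J : Ideal T} {L : Ideal C}
    (hT : Function.Surjective (algebraMap P T)) (hJ : J ^ 2 = ⊥)
    (hKJ : K.map (algebraMap P T) = J) (hKL : K.map (algebraMap P C) ≤ L)
    (hker : ∀ k ∈ K, algebraMap P T k = 0 → algebraMap P C k = 0)
    (f : P →ₐ[S] T) (hf : (Ideal.Quotient.mkₐ S J).comp f = IsScalarTower.toAlgHom S P (T ⧸ J))
    (hfK : ∀ k ∈ K, f k = 0) :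
    ∃ δ : Derivation S P L, ∀ k ∈ K, (δ k : C) = algebraMap P C k := by
  let κ : K →ₗ[P] J :=
    { toFun k := ⟨algebraMap P T k, hKJ ▸ Ideal.mem_map_of_mem _ k.2⟩
      map_add' a b := by ext; simp
      map_smul' a b := by ext; simp [Algebra.smul_def] }
  let Θ₀ : K →ₗ[P] L :=
    { toFun k := ⟨algebraMap P C k, hKL (Ideal.mem_map_of_mem _ k.2)⟩
      map_add' a b := by ext; simp
      map_smul' a b := by ext; simp [Algebra.smul_def] }
  have hκ : Function.Surjective κ := by
    rintro ⟨t, ht⟩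
    rw [← hKJ] at ht
    obtain ⟨k, hk, rfl⟩ := (Ideal.mem_map_iff_of_surjective _ hT).mp ht
    exact ⟨⟨k, hk⟩, rfl⟩
  have hle : LinearMap.ker κ ≤ LinearMap.ker Θ₀ := fun k hk =>
    Subtype.ext (hker k k.2 (congrArg Subtype.val hk))
  let Θ : J →ₗ[P] L :=
    (LinearMap.ker κ).liftQ Θ₀ hle ∘ₗ (κ.quotKerEquivOfSurjective hκ).symm.toLinearMap
  have hΘ : ∀ k, Θ (κ k) = Θ₀ k := fun k => by simp [Θ]
  refine ⟨-(Θ.compDer (derivationToSquareZeroOfLift J hJ f hf)), fun k hk => ?_⟩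
  have hfk : derivationToSquareZeroOfLift J hJ f hf k = -κ ⟨k, hk⟩ := by
    ext
    simp [derivationToSquareZeroOfLift_apply, hfK k hk, κ]
  simp [hfk, hΘ, Θ₀]

theorem AlgHom.exists_factor_mod_of_derivation_eq_on_ker {B : Type*} [CommRing B] [Algebra S B]
    (π : P →ₐ[S] B) (hπ : Function.Surjective π) (L : Ideal C) (hL : L ^ 2 = ⊥)
    (δ : Derivation S P L) (hδ : ∀ k ∈ RingHom.ker π, (δ k : C) = algebraMap P C k) :
    ∃ h : B →ₐ[S] C, ∀ x,
      Ideal.Quotient.mk L (h (π x)) = Ideal.Quotient.mk L (algebraMap P C x) := by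
  let h' := liftOfDerivationToSquareZero L hL (-δ)
  have hker : RingHom.ker π.toRingHom ≤ RingHom.ker h'.toRingHom := fun k hk => by
    rw [RingHom.mem_ker, AlgHom.toRingHom_eq_coe, RingHom.coe_coe,
      liftOfDerivationToSquareZero_apply, Derivation.neg_apply, Submodule.coe_neg, hδ k hk,
      neg_add_cancel]
  refine ⟨π.liftOfSurjective hπ h' hker, fun x => ?_⟩
  rw [AlgHom.liftOfSurjective_apply, liftOfDerivationToSquareZero_mk_apply]
  rfl

end SquareZeroLift

variable {R : Type*} [CommRing R] (I : Ideal R)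

section Presentation

variable {P B : Type*} [CommRing P] [CommRing B] [Algebra R P] [Algebra R B] (q : P →ₐ[R] B)

theorem AlgHom.surjective_of_surjective_mk_comp (hI : I ^ 2 = ⊥)
    (hq : Function.Surjective (Ideal.Quotient.mk (I.map (algebraMap R B)) ∘ q)) :
    Function.Surjective q := by
  have hle : (⊤ : Submodule R B) ≤ LinearMap.range q.toLinearMap ⊔ I • ⊤ := fun b _ => by
    obtain ⟨x, hx⟩ := hq (Ideal.Quotient.mk _ b)
    have hbx : b - q x ∈ I • (⊤ : Submodule R B) := by
      rw [Ideal.smul_top_eq_map, Submodule.restrictScalars_mem,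
        ← Ideal.Quotient.mk_eq_mk_iff_sub_mem]
      exact hx.symm
    simpa using Submodule.add_mem_sup (LinearMap.mem_range_self q.toLinearMap x) hbx
  exact fun b => Submodule.le_of_le_sup_smul_of_sq_eq_bot hI hle Submodule.mem_top

variable (hq : Function.Surjective q)

include hq in
theorem AlgHom.ker_le_map_ker_of_comp_eq {Q : Type*} [CommRing Q] (ρ : P →+* Q)
    (hρ : Function.Surjective ρ) (hρI : I.map (algebraMap R P) ≤ RingHom.ker ρ)
    (q' : Q →+* B ⧸ I.map (algebraMap R B))
    (hcomm : q'.comp ρ = (Ideal.Quotient.mk _).comp q.toRingHom) :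
    RingHom.ker q' ≤ (RingHom.ker q).map ρ := by
  intro y hy
  obtain ⟨x, rfl⟩ := hρ y
  have hqx : q x ∈ (I.map (algebraMap R P)).map q.toRingHom := by
    rw [Ideal.map_map, AlgHom.toRingHom_eq_coe, q.comp_algebraMap,
      ← Ideal.Quotient.eq_zero_iff_mem]
    exact (RingHom.congr_fun hcomm x).symm.trans hy
  obtain ⟨z, hz, hzx⟩ := (Ideal.mem_map_iff_of_surjective _ hq).mp hqx
  have hxz : x - z ∈ RingHom.ker q := by rw [RingHom.mem_ker, map_sub, hzx, sub_self]
  simpa [RingHom.mem_ker.mp (hρI hz)] using Ideal.mem_map_of_mem ρ hxz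

variable [Module.Flat R B]

include hq in
theorem AlgHom.mem_smul_ker_of_flat {x : P} (hxK : x ∈ RingHom.ker q)
    (hxI : x ∈ I.map (algebraMap R P)) : x ∈ I • (RingHom.ker q).restrictScalars R := by
  have hx : x ∈ LinearMap.ker q.toLinearMap ⊓ I • ⊤ := ⟨hxK, by rwa [Ideal.smul_top_eq_map]⟩
  rwa [LinearMap.ker_inf_smul_top_eq_smul_of_flat I q.toLinearMap hq] at hx

include hq in
theorem AlgHom.map_eq_zero_of_mem_ker_of_flat (hI : I ^ 2 = ⊥) {C : Type*} [CommRing C]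
    [Algebra R C] (p : P →ₐ[R] C) (hp : ∀ k ∈ RingHom.ker q, p k ∈ I.map (algebraMap R C))
    {x : P} (hxK : x ∈ RingHom.ker q) (hx : x ∈ RingHom.ker q ^ 2 ⊔ I.map (algebraMap R P)) :
    p x = 0 := by
  have hIC := Ideal.map_sq_eq_bot (algebraMap R C) hI
  obtain ⟨a, ha, b, hb, rfl⟩ := Submodule.mem_sup.mp hx
  have hpa : p a = 0 := by
    have hpa : p a ∈ (RingHom.ker q).map p ^ 2 := by
      rw [← Ideal.map_pow]
      exact Ideal.mem_map_of_mem p ha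
    have hle : (RingHom.ker q).map p ≤ I.map (algebraMap R C) := Ideal.map_le_iff_le_comap.mpr hp
    simpa [hIC] using Ideal.pow_right_mono hle 2 hpa
  have hbK : b ∈ RingHom.ker q := by simpa using sub_mem hxK (Ideal.pow_le_self two_ne_zero ha)
  have hpb : p b = 0 := by
    refine Submodule.smul_induction_on (q.mem_smul_ker_of_flat I hq hbK hb) (fun i hi k hk => ?_)
      (fun c d hc hd => by rw [map_add, hc, hd, add_zero])
    have hmem : algebraMap R C i * p k ∈ I.map (algebraMap R C) ^ 2 :=
      pow_two (I.map (algebraMap R C)) ▸ Ideal.mul_mem_mul (Ideal.mem_map_of_mem _ hi) (hp k hk)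
    rwa [hIC, Ideal.mem_bot, ← Algebra.smul_def, ← map_smul] at hmem
  rw [map_add, hpa, hpb, add_zero]

include hq in
theorem AlgHom.ker_le_of_le_sup_of_flat (hI : I ^ 2 = ⊥) {N : Ideal P} (hN : N ≤ RingHom.ker q)
    (h : RingHom.ker q ≤ N ⊔ I.map (algebraMap R P)) : RingHom.ker q ≤ N := by
  have hle : (RingHom.ker q).restrictScalars R ≤
      N.restrictScalars R ⊔ I • (RingHom.ker q).restrictScalars R := fun x hx => by
    obtain ⟨n, hn, y, hy, rfl⟩ := Submodule.mem_sup.mp (h hx)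
    have hyK : y ∈ RingHom.ker q := by simpa using sub_mem hx (hN hn)
    exact Submodule.add_mem_sup hn (q.mem_smul_ker_of_flat I hq hyK hy)
  exact Submodule.le_of_le_sup_smul_of_sq_eq_bot hI hle

end Presentation

section Thickening

variable {S B : Type*} [CommRing S] [CommRing B] [Algebra R S] [Algebra R B] [Algebra S B]
  [IsScalarTower R S B]

theorem Algebra.FormallyUnramified.of_formallyUnramified_quotient (hI : I ^ 2 = ⊥)
    [Algebra.FormallyUnramified S (B ⧸ I.map (algebraMap R B))] :
    Algebra.FormallyUnramified S B := by
  set J := I.map (algebraMap R B)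
  have hD : ∀ x, KaehlerDifferential.kerCotangentToTensor S B (B ⧸ J) x = 0 := by
    intro x
    obtain ⟨⟨j, hj⟩, rfl⟩ := Ideal.toCotangent_surjective _ x
    rw [KaehlerDifferential.kerCotangentToTensor_toCotangent]
    replace hj : j ∈ I • (⊤ : Submodule R B) := by
      rw [Ideal.smul_top_eq_map]
      rwa [Ideal.Quotient.algebraMap_eq, Ideal.mk_ker] at hj
    dsimp only
    refine Submodule.smul_induction_on hj (fun i hi b _ => ?_) (fun a b ha hb => ?_)
    · have hi' : (i • 1 : B ⧸ J) = 0 := by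
        rw [Algebra.smul_def, mul_one, ← Ideal.Quotient.mk_algebraMap,
          Ideal.Quotient.eq_zero_iff_mem]
        exact Ideal.mem_map_of_mem _ hi
      rw [Derivation.map_smul_of_tower, TensorProduct.tmul_smul, TensorProduct.smul_tmul', hi',
        TensorProduct.zero_tmul]
    · rw [map_add, TensorProduct.tmul_add, ha, hb, add_zero]
  have hexact := KaehlerDifferential.exact_kerCotangentToTensor_mapBaseChange S B (B ⧸ J)
    Ideal.Quotient.mk_surjective
  have htensor : Subsingleton ((B ⧸ J) ⊗[B] Ω[B⁄S]) := by
    refine subsingleton_of_forall_eq 0 fun y => ?_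
    obtain ⟨x, rfl⟩ := (hexact y).mp (Subsingleton.elim _ _)
    exact hD x
  have htop : (⊤ : Submodule B Ω[B⁄S]) ≤ ⊥ ⊔ J • ⊤ := by
    rw [bot_sup_eq, top_le_iff, ← Submodule.Quotient.subsingleton_iff]
    exact (TensorProduct.quotTensorEquivQuotSMul Ω[B⁄S] J).symm.subsingleton
  exact ⟨subsingleton_of_forall_eq 0 fun ω => (Submodule.mem_bot B).mp
    (Submodule.le_of_le_sup_smul_of_sq_eq_bot (Ideal.map_sq_eq_bot _ hI) htop Submodule.mem_top)⟩

theorem MvPolynomial.ker_map_algebraMap_quotient (ι : Type*) :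
    RingHom.ker (map (σ := ι) (algebraMap S (S ⧸ I.map (algebraMap R S)))) =
      I.map (algebraMap R (MvPolynomial ι S)) := by
  rw [ker_map, Ideal.Quotient.algebraMap_eq, Ideal.mk_ker, Ideal.map_map, ← algebraMap_eq,
    ← IsScalarTower.algebraMap_eq]

variable [Algebra (S ⧸ I.map (algebraMap R S)) (B ⧸ I.map (algebraMap R B))]
  [IsScalarTower S (S ⧸ I.map (algebraMap R S)) (B ⧸ I.map (algebraMap R B))]

omit [IsScalarTower R S B] in
theorem MvPolynomial.aeval_mk_comp_map {ι : Type*} (v : ι → B) :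
    (aeval (R := S ⧸ I.map (algebraMap R S)) (Ideal.Quotient.mk (I.map (algebraMap R B)) ∘ v)
      ).toRingHom.comp (map (algebraMap S _)) =
      (Ideal.Quotient.mk _).comp (aeval (R := S) v).toRingHom := by
  refine ringHom_ext (fun s => ?_) (fun i => ?_)
  · simp [IsScalarTower.algebraMap_apply S (S ⧸ I.map (algebraMap R S))
      (B ⧸ I.map (algebraMap R B))]
  · simp

theorem MvPolynomial.map_ker_aeval_eq_ker_aeval_mk {ι : Type*} (v : ι → B)
    (hv : Function.Surjective (aeval (R := S) v)) :
    (RingHom.ker (aeval (R := S) v).toRingHom).map (map (algebraMap S _)) =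
      RingHom.ker (aeval (R := S ⧸ I.map (algebraMap R S))
        (Ideal.Quotient.mk (I.map (algebraMap R B)) ∘ v)).toRingHom := by
  have hcomm := aeval_mk_comp_map (S := S) I v
  have hle := ((aeval (R := S) v).restrictScalars R).ker_le_map_ker_of_comp_eq I hv
    (map (σ := ι) (algebraMap S (S ⧸ I.map (algebraMap R S))))
    (map_surjective _ Ideal.Quotient.mk_surjective) (ker_map_algebraMap_quotient I ι).ge _ hcomm
  refine le_antisymm (Ideal.map_le_iff_le_comap.mpr fun k hk => ?_) hle
  rw [Ideal.mem_comap, RingHom.mem_ker]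
  exact (RingHom.congr_fun hcomm k).trans
    (by rw [RingHom.comp_apply, RingHom.mem_ker.mp hk, map_zero])

theorem MvPolynomial.eq_zero_of_map_mem_ker_sq_of_flat (hI : I ^ 2 = ⊥) [Module.Flat R B]
    {ι : Type*} (v : ι → B) (hv : Function.Surjective (aeval (R := S) v)) {C : Type*}
    [CommRing C] [Algebra R C] (p : MvPolynomial ι S →ₐ[R] C)
    (hp : ∀ k ∈ RingHom.ker (aeval (R := S) v), p k ∈ I.map (algebraMap R C)) {k : MvPolynomial ι S}
    (hk : k ∈ RingHom.ker (aeval (R := S) v))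
    (hk2 : map (algebraMap S (S ⧸ I.map (algebraMap R S))) k ∈ RingHom.ker
      (aeval (R := S ⧸ I.map (algebraMap R S)) (Ideal.Quotient.mk (I.map (algebraMap R B)) ∘ v)
        ).toRingHom ^ 2) : p k = 0 := by
  rw [← map_ker_aeval_eq_ker_aeval_mk I v hv, ← Ideal.map_pow] at hk2
  obtain ⟨a, ha, hak⟩ := (Ideal.mem_map_iff_of_surjective _
    (map_surjective _ Ideal.Quotient.mk_surjective)).mp hk2
  have hka : k - a ∈ I.map (algebraMap R (MvPolynomial ι S)) := by
    rw [← ker_map_algebraMap_quotient I, RingHom.mem_ker, map_sub, hak, sub_self]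
  have hsup : k ∈ RingHom.ker (aeval (R := S) v).toRingHom ^ 2 ⊔ I.map (algebraMap R _) := by
    rw [← add_sub_cancel a k]
    exact Submodule.add_mem_sup ha hka
  let q : MvPolynomial ι S →ₐ[R] B := (aeval v).restrictScalars R
  exact q.map_eq_zero_of_mem_ker_of_flat I hv hI p hp hk hsup

theorem exists_comp_eq_of_formallySmooth_quotient
    [Algebra.FormallySmooth (S ⧸ I.map (algebraMap R S)) (B ⧸ I.map (algebraMap R B))]
    {D E : Type*} [CommRing D] [CommRing E] [Algebra S D] [Algebra S E]
    (hD : I.map (algebraMap R S) ≤ RingHom.ker (algebraMap S D)) (φ : D →ₐ[S] E)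
    (hφ : Function.Surjective φ) (hφ' : IsNilpotent (RingHom.ker φ)) (g : B →ₐ[S] E) :
    ∃ h : B →ₐ[S] D, φ.comp h = g := by
  let S' := S ⧸ I.map (algebraMap R S)
  have hS : Function.Surjective (algebraMap S S') := Ideal.Quotient.mk_surjective
  let _ : Algebra S' D := (Ideal.Quotient.lift _ (algebraMap S D) hD).toAlgebra
  let _ : Algebra S' E := ((φ : D →+* E).comp (algebraMap S' D)).toAlgebra
  have : IsScalarTower S S' D := IsScalarTower.of_algebraMap_eq fun _ => rfl
  have : IsScalarTower S S' E := IsScalarTower.of_algebraMap_eq fun s => (φ.commutes s).symm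
  have hg : I.map (algebraMap R B) ≤ RingHom.ker g := Ideal.map_le_iff_le_comap.mpr fun i hi => by
    have hi' : algebraMap S D (algebraMap R S i) = 0 := hD (Ideal.mem_map_of_mem _ hi)
    rw [Ideal.mem_comap, RingHom.mem_ker, IsScalarTower.algebraMap_apply R S B, g.commutes,
      ← φ.commutes, hi', map_zero]
  let g' := (Ideal.Quotient.liftₐ _ g hg).extendScalarsOfSurjective hS
  let φ' := φ.extendScalarsOfSurjective hS
  let σ := Algebra.FormallySmooth.liftOfSurjective g' φ' hφ hφ'
  refine ⟨(σ.restrictScalars S).comp (Ideal.Quotient.mkₐ S _), AlgHom.ext fun b => ?_⟩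
  exact Algebra.FormallySmooth.liftOfSurjective_apply g' φ' hφ hφ' _

set_option synthInstance.maxHeartbeats 100000 in
theorem exists_derivation_eq_on_ker_of_flat (hI : I ^ 2 = ⊥) [Module.Flat R B]
    [Algebra.FormallySmooth (S ⧸ I.map (algebraMap R S)) (B ⧸ I.map (algebraMap R B))]
    {ι : Type*} (v : ι → B) (hv : Function.Surjective (aeval (R := S) v))
    {C : Type*} [CommRing C] [Algebra R C] [Algebra S C] [IsScalarTower R S C]
    [Algebra (MvPolynomial ι S) C] [IsScalarTower S (MvPolynomial ι S) C]
    (hC : (RingHom.ker (aeval (R := S) v)).map (algebraMap _ C) ≤ I.map (algebraMap R C)) :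
    ∃ δ : Derivation S (MvPolynomial ι S) (I.map (algebraMap R C)),
      ∀ k ∈ RingHom.ker (aeval (R := S) v), (δ k : C) = algebraMap _ C k := by
  let S' := S ⧸ I.map (algebraMap R S)
  let P := MvPolynomial ι S
  let π : P →ₐ[S] B := aeval v
  let ρ : P →ₐ[S] MvPolynomial ι S' := mapAlgHom (Algebra.ofId S S')
  let π' : MvPolynomial ι S' →ₐ[S'] B ⧸ I.map (algebraMap R B) := aeval (Ideal.Quotient.mk _ ∘ v)
  have hρ : Function.Surjective ρ := map_surjective _ Ideal.Quotient.mk_surjective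
  have hKπ' : (RingHom.ker π.toRingHom).map ρ.toRingHom = RingHom.ker π'.toRingHom :=
    map_ker_aeval_eq_ker_aeval_mk I v hv
  have hπ' : Function.Surjective π' := by
    intro y
    obtain ⟨b, rfl⟩ := Ideal.Quotient.mk_surjective y
    obtain ⟨x, rfl⟩ := hv b
    exact ⟨ρ x, RingHom.congr_fun (aeval_mk_comp_map I v) x⟩
  obtain ⟨σ, hσ⟩ := (Algebra.FormallySmooth.iff_split_surjection π' hπ').mp inferInstance
  let T := MvPolynomial ι S' ⧸ RingHom.ker π'.toRingHom ^ 2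
  let ρT : P →+* T := (Ideal.Quotient.mk _).comp ρ.toRingHom
  let _ : Algebra P T := @RingHom.toAlgebra P T _ _ ρT
  have : IsScalarTower S P T := IsScalarTower.of_algebraMap_eq fun s => by
    change _ = Ideal.Quotient.mk _ (ρ (algebraMap S P s))
    rw [ρ.commutes, Ideal.Quotient.mk_algebraMap]
  let f : P →ₐ[S] T := ((σ.restrictScalars S).comp (π'.restrictScalars S)).comp ρ
  refine exists_derivation_eq_algebraMap_on_ideal (J := (RingHom.ker π'.toRingHom).cotangentIdeal)
    (Ideal.Quotient.mk_surjective.comp hρ) (Ideal.cotangentIdeal_square _) ?_ hC ?_ f ?_ ?_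
  · change (RingHom.ker π.toRingHom).map ((Ideal.Quotient.mk _).comp ρ.toRingHom) = _
    rw [← Ideal.map_map, hKπ']
    exact Ideal.map_eq_submodule_map _ _
  · exact fun k hk hk0 => eq_zero_of_map_mem_ker_sq_of_flat I hI v hv
      ((IsScalarTower.toAlgHom S P C).restrictScalars R)
      (fun k hk => hC (Ideal.mem_map_of_mem _ hk)) hk (Ideal.Quotient.eq_zero_iff_mem.mp hk0)
  · refine AlgHom.ext fun x => Ideal.Quotient.eq.mpr ?_
    rw [← AlgHom.ker_kerSquareLift, RingHom.mem_ker, map_sub]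
    exact sub_eq_zero.mpr ((AlgHom.congr_fun hσ _).trans (π'.kerSquareLift_mk _).symm)
  · intro k hk
    have hρk : π' (ρ k) = 0 := hKπ'.le (Ideal.mem_map_of_mem _ hk)
    change σ (π' (ρ k)) = 0
    rw [hρk, map_zero]

theorem exists_lift_of_flat_of_formallySmooth_quotient (hI : I ^ 2 = ⊥) [Module.Flat R B]
    [Algebra.FormallySmooth (S ⧸ I.map (algebraMap R S)) (B ⧸ I.map (algebraMap R B))]
    {C : Type*} [CommRing C] [Algebra R C] [Algebra S C] [IsScalarTower R S C]
    (g : B →ₐ[S] C ⧸ I.map (algebraMap R C)) :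
    ∃ h : B →ₐ[S] C, (Ideal.Quotient.mkₐ S _).comp h = g := by
  have hIC := Ideal.map_sq_eq_bot (algebraMap R C) hI
  let π : MvPolynomial B S →ₐ[S] B := aeval id
  have hπ : Function.Surjective π := fun b => ⟨X b, aeval_X _ _⟩
  let p := Algebra.FormallySmooth.lift _ ⟨2, hIC⟩ (g.comp π)
  have hp : ∀ x, Ideal.Quotient.mk _ (p x) = g (π x) := Algebra.FormallySmooth.mk_lift _ _ _
  let _ : Algebra (MvPolynomial B S) C := p.toAlgebra
  have : IsScalarTower S (MvPolynomial B S) C :=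
    IsScalarTower.of_algebraMap_eq fun s => (p.commutes s).symm
  have hpK : (RingHom.ker π).map (algebraMap _ C) ≤ I.map (algebraMap R C) :=
    Ideal.map_le_iff_le_comap.mpr fun k hk => by
      rw [Ideal.mem_comap, ← Ideal.Quotient.eq_zero_iff_mem]
      exact (hp k).trans (by rw [RingHom.mem_ker.mp hk, map_zero])
  obtain ⟨δ, hδ⟩ := exists_derivation_eq_on_ker_of_flat I hI id hπ hpK
  obtain ⟨h, hh⟩ := π.exists_factor_mod_of_derivation_eq_on_ker hπ _ hIC δ hδ
  refine ⟨h, AlgHom.ext fun b => ?_⟩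
  obtain ⟨x, rfl⟩ := hπ b
  exact (hh x).trans (hp x)

theorem Algebra.FormallySmooth.of_flat_of_formallySmooth_quotient (hI : I ^ 2 = ⊥)
    [Module.Flat R B]
    [Algebra.FormallySmooth (S ⧸ I.map (algebraMap R S)) (B ⧸ I.map (algebraMap R B))]
    [Algebra.FormallyUnramified S B] : Algebra.FormallySmooth S B := by
  refine Algebra.FormallySmooth.of_comp_surjective fun C _ _ J hJ g => ?_
  let _ : Algebra R C := ((algebraMap S C).comp (algebraMap R S)).toAlgebra
  have : IsScalarTower R S C := IsScalarTower.of_algebraMap_eq fun _ => rfl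
  let IC := I.map (algebraMap R C)
  let φ : C ⧸ IC →ₐ[S] C ⧸ (IC ⊔ J) := Ideal.Quotient.factorₐ S le_sup_left
  let ψ : C ⧸ J →ₐ[S] C ⧸ (IC ⊔ J) := Ideal.Quotient.factorₐ S le_sup_right
  have hD : I.map (algebraMap R S) ≤ RingHom.ker (algebraMap S (C ⧸ IC)) :=
    Ideal.map_le_iff_le_comap.mpr fun i hi => by
      rw [Ideal.mem_comap, RingHom.mem_ker, ← Ideal.Quotient.mk_algebraMap,
        Ideal.Quotient.eq_zero_iff_mem]
      exact Ideal.mem_map_of_mem _ hi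
  have hφker : RingHom.ker φ = J.map (Ideal.Quotient.mk IC) := by
    rw [← bot_sup_eq (J.map _), ← Ideal.map_quotient_self IC, ← Ideal.map_sup]
    exact Ideal.Quotient.factor_ker le_sup_left
  have hψker : RingHom.ker ψ.toRingHom = IC.map (Ideal.Quotient.mk J) := by
    rw [← sup_bot_eq (IC.map _), ← Ideal.map_quotient_self J, ← Ideal.map_sup]
    exact Ideal.Quotient.factor_ker le_sup_right
  obtain ⟨h₁, hh₁⟩ := exists_comp_eq_of_formallySmooth_quotient I hD φ
    (Ideal.Quotient.factor_surjective le_sup_left) ⟨2, by rw [hφker, Ideal.map_sq_eq_bot _ hJ]; rfl⟩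
    (ψ.comp g)
  obtain ⟨h, hh⟩ := exists_lift_of_flat_of_formallySmooth_quotient I hI h₁
  refine ⟨h, Algebra.FormallyUnramified.ext' ψ.toRingHom
    ⟨2, by rw [hψker, Ideal.map_sq_eq_bot _ (Ideal.map_sq_eq_bot _ hI)]; rfl⟩ _ _ fun b => ?_⟩
  calc ψ (Ideal.Quotient.mk J (h b)) = φ (Ideal.Quotient.mk IC (h b)) := rfl
    _ = φ (h₁ b) := by rw [← hh]; rfl
    _ = ψ (g b) := AlgHom.congr_fun hh₁ b

theorem Algebra.FinitePresentation.of_flat_of_finitePresentation_quotient (hI : I ^ 2 = ⊥)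
    [Module.Flat R B]
    [Algebra.FinitePresentation (S ⧸ I.map (algebraMap R S)) (B ⧸ I.map (algebraMap R B))] :
    Algebra.FinitePresentation S B := by
  obtain ⟨n, f, hf, T, hT⟩ := ‹Algebra.FinitePresentation (S ⧸ I.map (algebraMap R S)) _›.out
  choose v hv using fun i => Ideal.Quotient.mk_surjective (f (X i))
  obtain rfl : f = aeval (Ideal.Quotient.mk _ ∘ v) := algHom_ext fun i => by simp [hv]
  let q : MvPolynomial (Fin n) S →ₐ[S] B := aeval v
  let ρ := map (σ := Fin n) (algebraMap S (S ⧸ I.map (algebraMap R S)))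
  have hρ : Function.Surjective ρ := map_surjective _ Ideal.Quotient.mk_surjective
  have hcomm := aeval_mk_comp_map (S := S) I v
  have hq : Function.Surjective q := (q.restrictScalars R).surjective_of_surjective_mk_comp I hI
    fun b => by
      obtain ⟨y, hy⟩ := hf b
      obtain ⟨x, rfl⟩ := hρ y
      exact ⟨x, (RingHom.congr_fun hcomm x).symm.trans hy⟩
  choose k hkK hkρ using fun t (ht : t ∈ T) => (Ideal.mem_map_iff_of_surjective ρ hρ).mp
    ((map_ker_aeval_eq_ker_aeval_mk I v hq).ge (hT ▸ Ideal.subset_span ht))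
  let N := Ideal.span (Set.range fun t : T => k t t.2)
  have hNK : N ≤ RingHom.ker q := Ideal.span_le.mpr (Set.range_subset_iff.mpr fun t => hkK t t.2)
  have hN : RingHom.ker q ≤ N ⊔ I.map (algebraMap R _) := fun x hx => by
    have hTN : Ideal.span (T : Set _) ≤ N.map ρ := Ideal.span_le.mpr fun t ht =>
      hkρ t ht ▸ Ideal.mem_map_of_mem ρ (Ideal.subset_span ⟨⟨t, ht⟩, rfl⟩)
    have hρx : ρ x ∈ Ideal.span (T : Set _) :=
      hT ▸ (map_ker_aeval_eq_ker_aeval_mk I v hq).le (Ideal.mem_map_of_mem ρ hx)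
    obtain ⟨y, hy, hyx⟩ := (Ideal.mem_map_iff_of_surjective ρ hρ).mp (hTN hρx)
    rw [← add_sub_cancel y x]
    refine Submodule.add_mem_sup hy ?_
    rw [← ker_map_algebraMap_quotient I, RingHom.mem_ker, map_sub, sub_eq_zero]
    exact hyx.symm
  have hKN := (q.restrictScalars R).ker_le_of_le_sup_of_flat I hq hI hNK hN
  exact ⟨n, q, hq, le_antisymm hKN hNK ▸ Submodule.fg_span (Set.finite_range _)⟩

end Thickening

/-- Let `R` be a commutative ring and `I` an ideal with `I² = 0`. Let `S` and
`B` be `R`-algebras, both flat as `R`-modules, and `f : S → B` an `R`-algebra homomorphism such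
that the induced ring homomorphism `S/IS → B/IB` is étale. Then `f` is étale, i.e. `B` is an
étale `S`-algebra via `f`. -/
theorem etale_of_flat_of_etale_mod_squareZero_ideal
    (R : Type u) [CommRing R] (I : Ideal R) (hI : I ^ 2 = ⊥)
    (S : Type u) [CommRing S] [Algebra R S]
    (B : Type u) [CommRing B] [Algebra R B] [Module.Flat R B]
    (f : S →ₐ[R] B)
    (het :
      letI : Algebra (S ⧸ I.map (algebraMap R S)) (B ⧸ I.map (algebraMap R B)) :=
        (Ideal.quotientMap (I.map (algebraMap R B)) f.toRingHom
          (by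
            rw [Ideal.map_le_iff_le_comap, Ideal.comap_comap]
            intro a ha
            rw [Ideal.mem_comap, RingHom.comp_apply]
            show f (algebraMap R S a) ∈ _
            rw [f.commutes]
            exact Ideal.mem_map_of_mem _ ha)).toAlgebra
      Algebra.Etale (S ⧸ I.map (algebraMap R S)) (B ⧸ I.map (algebraMap R B))) :
    letI : Algebra S B := f.toRingHom.toAlgebra
    Algebra.Etale S B := by
  let _ : Algebra S B := f.toRingHom.toAlgebra
  have : IsScalarTower R S B := IsScalarTower.of_algebraMap_eq' f.comp_algebraMap.symm
  -- the instance of `het`, up to the irrelevant proof argument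
  let _ : Algebra (S ⧸ I.map (algebraMap R S)) (B ⧸ I.map (algebraMap R B)) :=
    (Ideal.quotientMap _ f.toRingHom (Ideal.map_le_iff_le_comap.mpr <| by
      rw [Ideal.comap_comap, AlgHom.toRingHom_eq_coe, f.comp_algebraMap]
      exact Ideal.le_comap_map)).toAlgebra
  have : IsScalarTower S (S ⧸ I.map (algebraMap R S)) (B ⧸ I.map (algebraMap R B)) :=
    IsScalarTower.of_algebraMap_eq fun _ => rfl
  have : Algebra.Etale (S ⧸ I.map (algebraMap R S)) (B ⧸ I.map (algebraMap R B)) := het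
  have : Algebra.FormallyUnramified S (B ⧸ I.map (algebraMap R B)) :=
    .comp S (S ⧸ I.map (algebraMap R S)) _
  have : Algebra.FormallyUnramified S B := .of_formallyUnramified_quotient I hI
  have : Algebra.FormallySmooth S B := .of_flat_of_formallySmooth_quotient I hI
  exact ⟨.of_formallyUnramified_and_formallySmooth, .of_flat_of_finitePresentation_quotient I hI⟩
end

section
/- Let p be a prime and let A be a commutative ring which is flat as a ℤ/p²ℤ-module. Let J be an ideal of A such that the quotient ring A/J is also flat as a ℤ/p²ℤ-module. Let x ∈ J be an element whose image in A/pA generates the image of J in A/pA (i.e., the ideal (J + pA)/pA is generated by the class of x). Then J is generated by x as an ideal of A, i.e., J = xA. -/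
/-!
Write `t = p` in `A`; then `t² = 0`. Since `x` generates `J` modulo `t`, every `y ∈ J` is
`a x + t b`, so `t b ∈ J`. In `ℤ/p²ℤ` the annihilator of `p` is `(p)`, and flatness of `A/J`
carries this over: `t b̄ = 0` in `A/J` forces `b̄ = t c̄`, i.e. `b = j + t c` with `j ∈ J`.
Then `t b = t j`, and writing `j = d x + t e` gives `t b = t d x`, so `y = (a + t d) x`.
-/

theorem ZMod.natCast_dvd_of_natCast_mul_eq_zero {n : ℕ} (hn : n ≠ 0) {a : ZMod (n ^ 2)}
    (ha : (n : ZMod (n ^ 2)) * a = 0) : (n : ZMod (n ^ 2)) ∣ a := by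
  obtain ⟨k, rfl⟩ := ZMod.intCast_surjective a
  have hk : (n : ℤ) * n ∣ n * k := by
    rw [← Int.cast_natCast, ← Int.cast_mul, ZMod.intCast_zmod_eq_zero_iff_dvd] at ha
    exact_mod_cast (by simpa [sq] using ha)
  obtain ⟨m, hm⟩ := Int.dvd_of_mul_dvd_mul_left (by exact_mod_cast hn) hk
  exact ⟨m, by rw [hm]; push_cast; ring⟩

theorem Module.Flat.exists_eq_smul_of_smul_eq_zero {R M : Type*} [CommRing R] [AddCommGroup M]
    [Module R M] [Module.Flat R M] {r s : R} (hrs : ∀ a, r * a = 0 → s ∣ a) {m : M}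
    (hm : r • m = 0) : ∃ m', m = s • m' := by
  obtain ⟨k, a, y, hmy, hra⟩ := Module.Flat.isTrivialRelation_of_sum_smul_eq_zero
    (f := fun _ : Unit ↦ r) (x := fun _ ↦ m) (by simpa using hm)
  choose c hc using fun j ↦ hrs (a () j) (by simpa using hra j)
  refine ⟨∑ j, c j • y j, ?_⟩
  simp only [hmy (), hc, Finset.smul_sum, mul_smul]

theorem Ideal.le_sup_of_map_mk_eq {A : Type*} [CommRing A] {I J K : Ideal A}
    (h : J.map (Ideal.Quotient.mk I) = K.map (Ideal.Quotient.mk I)) : J ≤ K ⊔ I := by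
  calc J ≤ (J.map (Ideal.Quotient.mk I)).comap (Ideal.Quotient.mk I) := Ideal.le_comap_map
    _ = K ⊔ I := by
      rw [h, Ideal.comap_map_of_surjective _ Ideal.Quotient.mk_surjective,
        ← RingHom.ker_eq_comap_bot, Ideal.mk_ker]

theorem Ideal.eq_span_singleton_of_le_span_singleton_sup {A : Type*} [CommRing A]
    {J : Ideal A} {x t : A} (hx : x ∈ J) (ht : t * t = 0)
    (hle : J ≤ Ideal.span {x} ⊔ Ideal.span {t})
    (hsat : ∀ b, t * b ∈ J → ∃ c, b - t * c ∈ J) : J = Ideal.span {x} := by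
  have hdecomp : ∀ y ∈ J, ∃ a b, y = a * x + t * b := fun y hy ↦ by
    obtain ⟨a, tb, htb, hab⟩ := Ideal.mem_span_singleton_sup.mp (hle hy)
    obtain ⟨b, rfl⟩ := Ideal.mem_span_singleton'.mp htb
    exact ⟨a, b, by rw [← hab, mul_comm b]⟩
  refine le_antisymm (fun y hy ↦ ?_) ((Ideal.span_singleton_le_iff_mem J).mpr hx)
  obtain ⟨a, b, rfl⟩ := hdecomp y hy
  have htb : t * b ∈ J := by simpa using J.sub_mem hy (J.mul_mem_left a hx)
  obtain ⟨c, hj⟩ := hsat b htb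
  obtain ⟨d, e, hde⟩ := hdecomp _ hj
  refine Ideal.mem_span_singleton'.mpr ⟨a + t * d, ?_⟩
  linear_combination (-t) * hde - (c + e) * ht

theorem ideal_principal_of_flat_quotient_of_principal_mod_p_general
    (p : ℕ) (hp : p.Prime) (A : Type*) [CommRing A]
    [Algebra (ZMod (p ^ 2)) A]
    (J : Ideal A) [Module.Flat (ZMod (p ^ 2)) (A ⧸ J)]
    (x : A) (hx : x ∈ J)
    (hgen : J.map (Ideal.Quotient.mk (Ideal.span {(p : A)})) =
      Ideal.span {Ideal.Quotient.mk (Ideal.span {(p : A)}) x}) :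
    J = Ideal.span {x} := by
  have hp_sq : (p : A) * p = 0 := by
    rw [← Nat.cast_mul, ← sq, ← map_natCast (algebraMap (ZMod (p ^ 2)) A), ZMod.natCast_self,
      map_zero]
  have hle : J ≤ Ideal.span {x} ⊔ Ideal.span {(p : A)} :=
    Ideal.le_sup_of_map_mk_eq (by rw [hgen, Ideal.map_span, Set.image_singleton])
  refine Ideal.eq_span_singleton_of_le_span_singleton_sup hx hp_sq hle fun b hb ↦ ?_
  have hpb : (p : ZMod (p ^ 2)) • Ideal.Quotient.mk J b = 0 := by
    rwa [Nat.cast_smul_eq_nsmul, nsmul_eq_mul, ← map_natCast (Ideal.Quotient.mk J), ← map_mul,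
      Ideal.Quotient.eq_zero_iff_mem]
  obtain ⟨c', hc'⟩ := Module.Flat.exists_eq_smul_of_smul_eq_zero
    (fun _ ↦ ZMod.natCast_dvd_of_natCast_mul_eq_zero hp.ne_zero) hpb
  obtain ⟨c, rfl⟩ := Ideal.Quotient.mk_surjective c'
  refine ⟨c, Ideal.Quotient.eq_zero_iff_mem.mp ?_⟩
  rw [map_sub, hc', Nat.cast_smul_eq_nsmul, nsmul_eq_mul, map_mul, map_natCast, sub_self]

/-- Let `p` be a prime and `A` a commutative ring flat as a `ℤ/p²ℤ`-module.
Let `J` be an ideal of `A` such that `A/J` is also flat over `ℤ/p²ℤ`. If `x ∈ J` is an element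
whose image in `A/pA` generates the image of `J` in `A/pA`, then `J = xA`. -/
theorem ideal_principal_of_flat_quotient_of_principal_mod_p
    (p : ℕ) (hp : p.Prime) (A : Type*) [CommRing A]
    [Algebra (ZMod (p ^ 2)) A] [Module.Flat (ZMod (p ^ 2)) A]
    (J : Ideal A) [Module.Flat (ZMod (p ^ 2)) (A ⧸ J)]
    (x : A) (hx : x ∈ J)
    (hgen : J.map (Ideal.Quotient.mk (Ideal.span {(p : A)})) =
      Ideal.span {Ideal.Quotient.mk (Ideal.span {(p : A)}) x}) :
    J = Ideal.span {x} :=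
  ideal_principal_of_flat_quotient_of_principal_mod_p_general p hp A J x hx hgen
end
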